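/- The map t ↦ Φ(Φ⁻¹(p) − t) for fixed p ∈ (0,1) is a strictly decreasing continuous bijection from ℝ onto (0,1), and the unique t at which Φ(Φ⁻¹(p_A) − t) = Φ(Φ⁻¹(p_B) + t) is t* = (Φ⁻¹(p_A) − Φ⁻¹(p_B))/2; hence the certified ℓ₂ radius σ·t* = (σ/2)(Φ⁻¹(p_A) − Φ⁻¹(p_B)) is the supremum of radii r for which Φ(Φ⁻¹(p_A) − r/σ) > Φ(Φ⁻¹(p_B) + r/σ). -/

import Mathlib

/-! Since the Gaussian density is positive and integrable, `Φ` is a strictly increasing continuous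
bijection `ℝ → (0,1)`, and so is every reflected shift `t ↦ Φ(c - t)` (decreasing). By injectivity
of `Φ`, the crossover equation `Φ(a - t) = Φ(b + t)` is the linear equation `a - t = b + t`, and
`Φ(b + r/σ) < Φ(a - r/σ)` says `r < σ(a - b)/2`: the set of certified radii is an open half-line
whose supremum is its endpoint. -/

open MeasureTheory ProbabilityTheory

/-- Standard normal CDF. -/
noncomputable def Phi (t : ℝ) : ℝ := ((gaussianReal 0 1) (Set.Iic t)).toReal

/-- Inverse of the standard normal CDF on (0,1). -/
noncomputable def PhiInv (p : ℝ) : ℝ := Function.invFun Phi p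

/-- Isotropic Gaussian N(0, σ²I) on ℝ^d. -/
noncomputable def isoGaussian (d : ℕ) (σ : ℝ) : Measure (EuclideanSpace ℝ (Fin d)) :=
  (Measure.pi fun _ : Fin d => gaussianReal 0 ⟨σ ^ 2, sq_nonneg σ⟩).map
    (MeasurableEquiv.toLp 2 (Fin d → ℝ))

open Filter Topology Set

section RealFunction

variable {f : ℝ → ℝ}

theorem StrictMono.range_eq_Ioo_of_tendsto {a b : ℝ} (hmono : StrictMono f) (hcont : Continuous f)
    (hbot : Tendsto f atBot (𝓝 a)) (htop : Tendsto f atTop (𝓝 b)) : range f = Ioo a b := by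
  apply subset_antisymm
  · rintro _ ⟨x, rfl⟩
    exact ⟨(hmono.monotone.le_of_tendsto hbot (x - 1)).trans_lt (hmono (sub_one_lt x)),
      (hmono (lt_add_one x)).trans_le (hmono.monotone.ge_of_tendsto htop (x + 1))⟩
  · rintro y ⟨hay, hyb⟩
    exact mem_range_of_exists_le_of_exists_ge hcont
      (hbot.eventually (eventually_le_nhds hay)).exists
      (htop.eventually (eventually_ge_nhds hyb)).exists

theorem StrictMono.strictAnti_comp_const_sub (hf : StrictMono f) (c : ℝ) :
    StrictAnti fun t => f (c - t) :=
  fun _ _ hst => hf (sub_lt_sub_left hst c)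

theorem range_comp_const_sub (c : ℝ) : range (fun t => f (c - t)) = range f :=
  have hsurj : Function.Surjective (c - ·) := fun y => ⟨c - y, sub_sub_cancel c y⟩
  hsurj.range_comp f

theorem StrictMono.apply_sub_eq_apply_add_iff (hf : StrictMono f) (a b t : ℝ) :
    f (a - t) = f (b + t) ↔ t = (a - b) / 2 := by
  rw [hf.injective.eq_iff]
  constructor <;> intro h <;> linarith

theorem StrictMono.setOf_apply_add_div_lt_apply_sub_div (hf : StrictMono f) (a b : ℝ) {σ : ℝ}
    (hσ : 0 < σ) : {r : ℝ | f (b + r / σ) < f (a - r / σ)} = Iio (σ / 2 * (a - b)) := by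
  ext r
  rw [mem_ofPred_eq, hf.lt_iff_lt, mem_Iio, ← sub_pos, ← sub_pos (a := σ / 2 * (a - b))]
  have key : σ / 2 * (a - b) - r = σ / 2 * (a - r / σ - (b + r / σ)) := by
    field_simp
    ring
  rw [key]
  exact (mul_pos_iff_of_pos_left (half_pos hσ)).symm

end RealFunction

section GaussianCDF

variable (μ : ℝ) {v : NNReal}

theorem cdf_gaussianReal_sub_cdf (hv : v ≠ 0) (a b : ℝ) :
    cdf (gaussianReal μ v) b - cdf (gaussianReal μ v) a = ∫ x in a..b, gaussianPDFReal μ v x := by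
  have hint := integrable_gaussianPDFReal μ v
  simp only [cdf_eq_real, measureReal_def, gaussianReal_apply_eq_integral μ hv,
    ENNReal.toReal_ofReal (setIntegral_nonneg measurableSet_Iic
      fun x _ => gaussianPDFReal_nonneg μ v x)]
  exact intervalIntegral.integral_Iic_sub_Iic hint.integrableOn hint.integrableOn

theorem strictMono_cdf_gaussianReal (hv : v ≠ 0) : StrictMono (cdf (gaussianReal μ v)) := by
  intro a b hab
  rw [← sub_pos, cdf_gaussianReal_sub_cdf μ hv]
  exact intervalIntegral.intervalIntegral_pos_of_pos
    (integrable_gaussianPDFReal μ v).intervalIntegrable (gaussianPDFReal_pos μ v · hv) hab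

theorem continuous_cdf_gaussianReal (hv : v ≠ 0) : Continuous (cdf (gaussianReal μ v)) := by
  have hprimitive : ⇑(cdf (gaussianReal μ v)) =
      fun t => cdf (gaussianReal μ v) 0 + ∫ x in (0 : ℝ)..t, gaussianPDFReal μ v x := by
    funext t
    rw [← cdf_gaussianReal_sub_cdf μ hv, add_sub_cancel]
  rw [hprimitive]
  exact continuous_const.add ((integrable_gaussianPDFReal μ v).continuous_primitive 0)

end GaussianCDF

theorem Phi_eq_cdf : Phi = cdf (gaussianReal 0 1) :=
  funext fun t => (cdf_eq_real _ t).symm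

theorem strictMono_Phi : StrictMono Phi :=
  Phi_eq_cdf ▸ strictMono_cdf_gaussianReal 0 one_ne_zero

theorem continuous_Phi : Continuous Phi :=
  Phi_eq_cdf ▸ continuous_cdf_gaussianReal 0 one_ne_zero

theorem range_Phi : range Phi = Ioo 0 1 :=
  strictMono_Phi.range_eq_Ioo_of_tendsto continuous_Phi
    (Phi_eq_cdf ▸ tendsto_cdf_atBot _) (Phi_eq_cdf ▸ tendsto_cdf_atTop _)

theorem certified_radius_crossover_general
    (σ : ℝ) (hσ : 0 < σ)
    (pA pB : ℝ) :
    (∀ p ∈ Set.Ioo (0 : ℝ) 1,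
      StrictAnti (fun t : ℝ => Phi (PhiInv p - t)) ∧
      Continuous (fun t : ℝ => Phi (PhiInv p - t)) ∧
      Set.range (fun t : ℝ => Phi (PhiInv p - t)) = Set.Ioo (0 : ℝ) 1) ∧
    (∀ t : ℝ, Phi (PhiInv pA - t) = Phi (PhiInv pB + t) ↔
      t = (PhiInv pA - PhiInv pB) / 2) ∧
    IsLUB {r : ℝ | Phi (PhiInv pB + r / σ) < Phi (PhiInv pA - r / σ)}
      (σ / 2 * (PhiInv pA - PhiInv pB)) := by
  refine ⟨fun p _ => ⟨?_, ?_, ?_⟩, strictMono_Phi.apply_sub_eq_apply_add_iff _ _, ?_⟩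
  · exact strictMono_Phi.strictAnti_comp_const_sub _
  · exact continuous_Phi.comp (continuous_const.sub continuous_id)
  · rw [range_comp_const_sub, range_Phi]
  · rw [strictMono_Phi.setOf_apply_add_div_lt_apply_sub_div _ _ hσ]
    exact isLUB_Iio

/-- The map t ↦ Φ(Φ⁻¹(p) − t) is a strictly decreasing continuous bijection onto (0,1);
the unique crossover of the two shifted bounds is t* = (Φ⁻¹(pA) − Φ⁻¹(pB))/2, and
σ·t* is the supremum of radii r with Φ(Φ⁻¹(pA) − r/σ) > Φ(Φ⁻¹(pB) + r/σ). -/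
theorem certified_radius_crossover
    (σ : ℝ) (hσ : 0 < σ)
    (pA pB : ℝ) (hpA : pA ∈ Set.Ioo (0 : ℝ) 1) (hpB : pB ∈ Set.Ioo (0 : ℝ) 1)
    (hAB : pB ≤ pA) :
    (∀ p ∈ Set.Ioo (0 : ℝ) 1,
      StrictAnti (fun t : ℝ => Phi (PhiInv p - t)) ∧
      Continuous (fun t : ℝ => Phi (PhiInv p - t)) ∧
      Set.range (fun t : ℝ => Phi (PhiInv p - t)) = Set.Ioo (0 : ℝ) 1) ∧
    (∀ t : ℝ, Phi (PhiInv pA - t) = Phi (PhiInv pB + t) ↔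
      t = (PhiInv pA - PhiInv pB) / 2) ∧
    IsLUB {r : ℝ | Phi (PhiInv pB + r / σ) < Phi (PhiInv pA - r / σ)}
      (σ / 2 * (PhiInv pA - PhiInv pB)) :=
  certified_radius_crossover_general σ hσ pA pB
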